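/- arXiv:2103.04072 — 3 statements merged into one kernel-verified Lean document; each statement's English description precedes it below -/
import Mathlib

section
/- The function f₅(r) = (1 + (1-r²)·artanh(r)/r)/√(1-r²) is strictly increasing and convex on (0,1), with limit 2 as r→0⁺ and tending to ∞ as r→1⁻. -/
open Real Set Filter Topology

noncomputable def artanh (r : ℝ) : ℝ := (1/2) * Real.log ((1+r)/(1-r))

noncomputable def ellipticK (r : ℝ) : ℝ :=
  ∫ t in (0:ℝ)..(π/2), (1 - r^2 * Real.sin t ^ 2) ^ (-(1/2) : ℝ)

noncomputable def ellipticE (r : ℝ) : ℝ :=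
  ∫ t in (0:ℝ)..(π/2), (1 - r^2 * Real.sin t ^ 2) ^ ((1/2) : ℝ)

/-!
Write `N r = r / (1 - r²) - artanh r`. A direct computation gives
`f₅' r = N r / (r² √(1 - r²))`, and `N` vanishes at `0` with `N' r = 2r² / (1 - r²)²`, so `N > 0`
and `f₅` is strictly increasing. For convexity factor `f₅' = (N r / r³) * (r / √(1 - r²))`:
both factors are nonnegative and increasing. For the first (in power series,
`N r / r³ = ∑_{k ≥ 1} 2k / (2k + 1) r^(2k - 2)`) this amounts to `r N' r ≥ 3 N r`, i.e.
`N r ≤ 2r³ / (3 (1 - r²)²)`, which again follows by comparing derivatives from `0`.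
The limits come from `artanh r / r → artanh' 0 = 1` and `f₅ r ≥ 1 / √(1 - r²)`.
-/

lemma strictMonoOn_of_hasDerivAt_pos {D : Set ℝ} (hD : Convex ℝ D) {f f' : ℝ → ℝ}
    (hf : ∀ x ∈ D, HasDerivAt f (f' x) x) (hf' : ∀ x ∈ interior D, 0 < f' x) :
    StrictMonoOn f D :=
  strictMonoOn_of_hasDerivWithinAt_pos hD
    (fun x hx => (hf x hx).continuousAt.continuousWithinAt)
    (fun x hx => (hf x (interior_subset hx)).hasDerivWithinAt) hf'

lemma monotoneOn_of_hasDerivAt_nonneg {D : Set ℝ} (hD : Convex ℝ D) {f f' : ℝ → ℝ}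
    (hf : ∀ x ∈ D, HasDerivAt f (f' x) x) (hf' : ∀ x ∈ interior D, 0 ≤ f' x) :
    MonotoneOn f D :=
  monotoneOn_of_hasDerivWithinAt_nonneg hD
    (fun x hx => (hf x hx).continuousAt.continuousWithinAt)
    (fun x hx => (hf x (interior_subset hx)).hasDerivWithinAt) hf'

lemma one_sub_sq_pos {r : ℝ} (h1 : -1 < r) (h2 : r < 1) : 0 < 1 - r ^ 2 := by nlinarith

lemma hasDerivAt_one_sub_sq (r : ℝ) : HasDerivAt (fun x : ℝ => 1 - x ^ 2) (-(2 * r)) r := by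
  simpa using (hasDerivAt_pow 2 r).const_sub 1

lemma artanh_zero : _root_.artanh 0 = 0 := by simp [_root_.artanh]

lemma hasDerivAt_artanh {r : ℝ} (h1 : -1 < r) (h2 : r < 1) :
    HasDerivAt _root_.artanh (1 / (1 - r ^ 2)) r := by
  have hp : 0 < 1 + r := by linarith
  have hm : 0 < 1 - r := by linarith
  have hq := ((hasDerivAt_id r).const_add 1).div ((hasDerivAt_id r).const_sub 1) hm.ne'
  have hlog := ((Real.hasDerivAt_log (div_pos hp hm).ne').comp r hq).const_mul (1 / 2 : ℝ)
  refine hlog.congr_deriv ?_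
  have := one_sub_sq_pos h1 h2
  simp only [id]
  field_simp
  ring

lemma artanh_nonneg {r : ℝ} (h0 : 0 ≤ r) (h1 : r < 1) : 0 ≤ _root_.artanh r :=
  mul_nonneg (by norm_num) (Real.log_nonneg ((one_le_div (by linarith)).2 (by linarith)))

lemma hasDerivAt_div_one_sub_sq_sub_artanh {r : ℝ} (h1 : -1 < r) (h2 : r < 1) :
    HasDerivAt (fun x : ℝ => x / (1 - x ^ 2) - _root_.artanh x)
      (2 * r ^ 2 / (1 - r ^ 2) ^ 2) r := by
  have := one_sub_sq_pos h1 h2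
  refine (((hasDerivAt_id r).div (hasDerivAt_one_sub_sq r) this.ne').sub
    (hasDerivAt_artanh h1 h2)).congr_deriv ?_
  simp only [id]
  field_simp
  ring

lemma artanh_lt_div_one_sub_sq {r : ℝ} (h0 : 0 < r) (h1 : r < 1) :
    _root_.artanh r < r / (1 - r ^ 2) := by
  have hmono : StrictMonoOn (fun x : ℝ => x / (1 - x ^ 2) - _root_.artanh x) (Ico 0 1) :=
    strictMonoOn_of_hasDerivAt_pos (convex_Ico 0 1)
      (fun x hx => hasDerivAt_div_one_sub_sq_sub_artanh (by linarith [hx.1]) hx.2)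
      (fun x hx => by
        rw [interior_Ico] at hx
        have := one_sub_sq_pos (by linarith [hx.1]) hx.2
        exact div_pos (by have := hx.1; positivity) (by positivity))
  have := hmono (left_mem_Ico.2 one_pos) ⟨h0.le, h1⟩ h0
  simp only [_root_.artanh_zero] at this
  linarith

lemma hasDerivAt_cube_div_one_sub_sq_sq {r : ℝ} (h1 : -1 < r) (h2 : r < 1) :
    HasDerivAt (fun x : ℝ => x ^ 3 / (1 - x ^ 2) ^ 2)
      ((3 * r ^ 2 + r ^ 4) / (1 - r ^ 2) ^ 3) r := by
  have := one_sub_sq_pos h1 h2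
  refine ((hasDerivAt_pow 3 r).div ((hasDerivAt_one_sub_sq r).fun_pow 2)
    (by positivity)).congr_deriv ?_
  field_simp
  ring

lemma div_one_sub_sq_sub_artanh_le {r : ℝ} (h0 : 0 ≤ r) (h1 : r < 1) :
    r / (1 - r ^ 2) - _root_.artanh r ≤ 2 / 3 * (r ^ 3 / (1 - r ^ 2) ^ 2) := by
  have hmono : MonotoneOn
      (fun x : ℝ => 2 / 3 * (x ^ 3 / (1 - x ^ 2) ^ 2) - (x / (1 - x ^ 2) - _root_.artanh x))
      (Ico 0 1) := by
    refine monotoneOn_of_hasDerivAt_nonneg (convex_Ico 0 1) (fun x hx =>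
      ((hasDerivAt_cube_div_one_sub_sq_sq (by linarith [hx.1]) hx.2).const_mul (2 / 3)).sub
        (hasDerivAt_div_one_sub_sq_sub_artanh (by linarith [hx.1]) hx.2)) (fun x hx => ?_)
    rw [interior_Ico] at hx
    have := one_sub_sq_pos (by linarith [hx.1]) hx.2
    have key : 2 / 3 * ((3 * x ^ 2 + x ^ 4) / (1 - x ^ 2) ^ 3) - 2 * x ^ 2 / (1 - x ^ 2) ^ 2 =
        8 / 3 * x ^ 4 / (1 - x ^ 2) ^ 3 := by
      field_simp
      ring
    rw [key]
    positivity
  have := hmono (left_mem_Ico.2 one_pos) ⟨h0, h1⟩ h0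
  simp only [_root_.artanh_zero] at this
  linarith

lemma monotoneOn_div_one_sub_sq_sub_artanh_div_cube :
    MonotoneOn (fun x : ℝ => (x / (1 - x ^ 2) - _root_.artanh x) / x ^ 3) (Ioo 0 1) := by
  refine monotoneOn_of_hasDerivAt_nonneg (convex_Ioo 0 1) (fun x hx =>
    (hasDerivAt_div_one_sub_sq_sub_artanh (by linarith [hx.1]) hx.2).div (hasDerivAt_pow 3 x)
      (pow_pos hx.1 3).ne') (fun x hx => ?_)
  rw [interior_Ioo] at hx
  have := one_sub_sq_pos (by linarith [hx.1]) hx.2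
  have hN := div_one_sub_sq_sub_artanh_le hx.1.le hx.2
  refine div_nonneg (sub_nonneg.2 ?_) (sq_nonneg _)
  calc (x / (1 - x ^ 2) - _root_.artanh x) * (3 * x ^ 2)
      ≤ 2 / 3 * (x ^ 3 / (1 - x ^ 2) ^ 2) * (3 * x ^ 2) := by gcongr
    _ = 2 * x ^ 2 / (1 - x ^ 2) ^ 2 * x ^ 3 := by ring

lemma monotoneOn_div_sqrt_one_sub_sq : MonotoneOn (fun x : ℝ => x / √(1 - x ^ 2)) (Ico 0 1) :=
  fun x hx y hy hxy => div_le_div₀ hy.1 hxy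
    (sqrt_pos.2 (one_sub_sq_pos (by linarith [hy.1]) hy.2)) (sqrt_le_sqrt (by nlinarith [hx.1]))

noncomputable def f₅ (r : ℝ) : ℝ := (1 + (1 - r ^ 2) * _root_.artanh r / r) / √(1 - r ^ 2)

lemma hasDerivAt_f₅ {r : ℝ} (h0 : 0 < r) (h1 : r < 1) :
    HasDerivAt f₅ ((r / (1 - r ^ 2) - _root_.artanh r) / (r ^ 2 * √(1 - r ^ 2))) r := by
  have h3 := one_sub_sq_pos (by linarith) h1
  have hs : 0 < √(1 - r ^ 2) := sqrt_pos.2 h3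
  have hs2 : √(1 - r ^ 2) ^ 2 = 1 - r ^ 2 := sq_sqrt h3.le
  have hnum := ((((hasDerivAt_one_sub_sq r).mul (hasDerivAt_artanh (by linarith) h1)).div
    (hasDerivAt_id r) h0.ne').const_add 1)
  have hden := (hasDerivAt_sqrt h3.ne').comp r (hasDerivAt_one_sub_sq r)
  refine (hnum.div hden hs.ne').congr_deriv ?_
  simp only [id, Function.comp_apply, Pi.mul_apply, Pi.div_apply]
  generalize √(1 - r ^ 2) = s at hs hs2 ⊢
  field_simp
  linear_combination -r ^ 2 * (r + _root_.artanh r * (1 - r ^ 2)) * hs2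

lemma strictMonoOn_f₅ : StrictMonoOn f₅ (Ioo 0 1) :=
  strictMonoOn_of_hasDerivAt_pos (convex_Ioo 0 1) (fun x hx => hasDerivAt_f₅ hx.1 hx.2)
    (fun x hx => by
      rw [interior_Ioo] at hx
      have := sqrt_pos.2 (one_sub_sq_pos (by linarith [hx.1]) hx.2)
      have := hx.1
      exact div_pos (sub_pos.2 (artanh_lt_div_one_sub_sq hx.1 hx.2)) (by positivity))

lemma convexOn_f₅ : ConvexOn ℝ (Ioo 0 1) f₅ := by
  have hderiv : EqOn
      (fun x : ℝ => (x / (1 - x ^ 2) - _root_.artanh x) / x ^ 3 * (x / √(1 - x ^ 2)))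
      (deriv f₅) (Ioo 0 1) := fun x hx => by
    rw [(hasDerivAt_f₅ hx.1 hx.2).deriv]
    have := hx.1.ne'
    field_simp
  refine MonotoneOn.convexOn_of_deriv (convex_Ioo 0 1)
    (fun x hx => (hasDerivAt_f₅ hx.1 hx.2).continuousAt.continuousWithinAt)
    (fun x hx => (hasDerivAt_f₅ (interior_subset hx).1 (interior_subset hx).2).differentiableAt
      |>.differentiableWithinAt) ?_
  rw [interior_Ioo]
  refine (MonotoneOn.mul monotoneOn_div_one_sub_sq_sub_artanh_div_cube
    (monotoneOn_div_sqrt_one_sub_sq.mono Ioo_subset_Ico_self) (fun x hx => ?_)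
    (fun x hx => div_nonneg hx.1.le (sqrt_nonneg _))).congr hderiv
  have := hx.1
  exact div_nonneg (sub_nonneg.2 (artanh_lt_div_one_sub_sq hx.1 hx.2).le) (by positivity)

lemma tendsto_f₅_nhdsGT_zero : Tendsto f₅ (𝓝[>] 0) (𝓝 2) := by
  have hslope : Tendsto (slope _root_.artanh 0) (𝓝[≠] 0) (𝓝 1) := by
    simpa using hasDerivAt_iff_tendsto_slope.1 (hasDerivAt_artanh (r := 0) (by norm_num) one_pos)
  have hpoly : Tendsto (fun r : ℝ => 1 - r ^ 2) (𝓝[≠] 0) (𝓝 1) :=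
    ((show Continuous fun r : ℝ => 1 - r ^ 2 by fun_prop).tendsto' 0 1 (by norm_num)).mono_left
      nhdsWithin_le_nhds
  have hlim := ((tendsto_const_nhds (x := (1 : ℝ))).add (hpoly.mul hslope)).div hpoly.sqrt
    (by norm_num)
  norm_num at hlim
  refine (hlim.mono_left (nhdsGT_le_nhdsNE 0)).congr fun r => ?_
  simp only [f₅, Pi.div_apply, slope_def_field, _root_.artanh_zero, sub_zero]
  ring

lemma tendsto_f₅_nhdsLT_one : Tendsto f₅ (𝓝[<] 1) atTop := by
  have hmem : Ioo (0 : ℝ) 1 ∈ 𝓝[<] 1 := Ioo_mem_nhdsLT one_pos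
  have hsqrt : Tendsto (fun r : ℝ => √(1 - r ^ 2)) (𝓝[<] 1) (𝓝[>] 0) := by
    refine tendsto_nhdsWithin_iff.2 ⟨?_, ?_⟩
    · exact ((show Continuous fun r : ℝ => √(1 - r ^ 2) by fun_prop).tendsto' 1 0
        (by norm_num)).mono_left nhdsWithin_le_nhds
    · filter_upwards [hmem] with r hr
      exact sqrt_pos.2 (one_sub_sq_pos (by linarith [hr.1]) hr.2)
  refine tendsto_atTop_mono' _ ?_ (tendsto_inv_nhdsGT_zero.comp hsqrt)
  filter_upwards [hmem] with r hr
  have hA : 0 ≤ (1 - r ^ 2) * _root_.artanh r / r :=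
    div_nonneg (mul_nonneg (one_sub_sq_pos (by linarith [hr.1]) hr.2).le
      (artanh_nonneg hr.1.le hr.2)) hr.1.le
  rw [Function.comp_apply, ← one_div]
  unfold f₅
  gcongr
  linarith

theorem stmt3 :
    StrictMonoOn (fun r : ℝ => (1 + (1 - r^2) * _root_.artanh r / r) / Real.sqrt (1 - r^2)) (Ioo 0 1) ∧
    ConvexOn ℝ (Ioo 0 1) (fun r : ℝ => (1 + (1 - r^2) * _root_.artanh r / r) / Real.sqrt (1 - r^2)) ∧
    Tendsto (fun r : ℝ => (1 + (1 - r^2) * _root_.artanh r / r) / Real.sqrt (1 - r^2)) (𝓝[>] 0) (𝓝 2) ∧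
    Tendsto (fun r : ℝ => (1 + (1 - r^2) * _root_.artanh r / r) / Real.sqrt (1 - r^2)) (𝓝[<] 1) atTop :=
  ⟨strictMonoOn_f₅, convexOn_f₅, tendsto_f₅_nhdsGT_zero, tendsto_f₅_nhdsLT_one⟩
end

section
/- The function f₁₄(r) = [3(1-r²) - (3 - 4r² - r⁴)·(artanh(r)/r)]/r⁴ has a power series expansion in r² with all coefficients positive (it equals 2·∑_{n≥0} (4n²+20n+13)/((2n+1)(2n+3)(2n+5)) · r^{2n}), with limit 26/15 as r→0⁺. -/
open Real Set Filter Topology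

/-!
With `A = artanh r = ∑ r^(2k+1)/(2k+1)`, the tails of this series divided by powers of `r` give
`∑ r^(2n)/(2n+2k+1) = (A - ∑_{i<k} r^(2i+1)/(2i+1)) / r^(2k+1)`. The partial fraction decomposition
`(4n²+20n+13)/((2n+1)(2n+3)(2n+5)) = (1/2)/(2n+1) + 2/(2n+3) - (3/2)/(2n+5)`
therefore expresses the series through `A`, `A - r` and `A - r - r³/3`, and the resulting
combination is `f₁₄(r)/2`. The coefficients lie in `(0, 1]`, so the series in `x = r²` is
continuous at `0` by the Weierstrass M-test, and its value there is the constant term `13/15`.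
-/

theorem hasSum_artanh {r : ℝ} (hr : |r| < 1) :
    HasSum (fun k : ℕ => r ^ (2 * k + 1) / (2 * k + 1)) (_root_.artanh r) := by
  have h₁ : 1 - r ≠ 0 := by linarith [le_abs_self r]
  have h₂ : 1 + r ≠ 0 := by linarith [neg_abs_le r]
  rw [_root_.artanh, Real.log_div h₂ h₁]
  exact ((hasSum_log_sub_log_of_abs_lt_one hr).mul_left (1 / 2)).congr_fun fun k => by ring

theorem hasSum_pow_div_two_mul_add {r : ℝ} (hr₀ : r ≠ 0) (hr : |r| < 1) (k : ℕ) :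
    HasSum (fun n : ℕ => r ^ (2 * n) / (2 * n + (2 * k + 1)))
      ((_root_.artanh r - ∑ i ∈ Finset.range k, r ^ (2 * i + 1) / (2 * i + 1)) / r ^ (2 * k + 1)) := by
  have htail := (hasSum_nat_add_iff' k).mpr (hasSum_artanh hr)
  refine (htail.div_const (r ^ (2 * k + 1))).congr_fun fun n => ?_
  rw [show 2 * (n + k) + 1 = 2 * n + (2 * k + 1) by ring, pow_add]
  push_cast
  field_simp
  ring

noncomputable def f14Coeff (n : ℕ) : ℝ :=
  (4 * (n : ℝ) ^ 2 + 20 * n + 13) / ((2 * n + 1) * (2 * n + 3) * (2 * n + 5))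

theorem f14Coeff_pos (n : ℕ) : 0 < f14Coeff n := by
  unfold f14Coeff; positivity

theorem f14Coeff_le_one (n : ℕ) : f14Coeff n ≤ 1 := by
  rw [f14Coeff, div_le_one (by positivity)]
  have hn : (0 : ℝ) ≤ n := n.cast_nonneg
  nlinarith [pow_nonneg hn 3]

theorem f14Coeff_eq (n : ℕ) :
    f14Coeff n = (1 / 2) / (2 * n + 1) + 2 / (2 * n + 3) - (3 / 2) / (2 * n + 5) := by
  rw [f14Coeff]
  field_simp
  ring

theorem hasSum_f14Coeff_mul_pow {r : ℝ} (hr₀ : r ≠ 0) (hr : |r| < 1) :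
    HasSum (fun n : ℕ => f14Coeff n * r ^ (2 * n))
      ((3 * (1 - r ^ 2) - (3 - 4 * r ^ 2 - r ^ 4) * (_root_.artanh r / r)) / r ^ 4 / 2) := by
  have h₀ := hasSum_pow_div_two_mul_add hr₀ hr 0
  have h₁ := hasSum_pow_div_two_mul_add hr₀ hr 1
  have h₂ := hasSum_pow_div_two_mul_add hr₀ hr 2
  norm_num [Finset.sum_range_succ] at h₀ h₁ h₂
  have hvalue : (3 * (1 - r ^ 2) - (3 - 4 * r ^ 2 - r ^ 4) * (_root_.artanh r / r)) / r ^ 4 / 2 =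
      1 / 2 * (_root_.artanh r / r) + 2 * ((_root_.artanh r - r) / r ^ 3) -
        3 / 2 * ((_root_.artanh r - (r + r ^ 3 / 3)) / r ^ 5) := by
    field_simp
    ring
  rw [hvalue]
  refine (((h₀.mul_left (1 / 2)).add (h₁.mul_left 2)).sub (h₂.mul_left (3 / 2))).congr_fun
    fun n => ?_
  rw [f14Coeff_eq]
  ring

theorem tendsto_tsum_mul_pow_zero {a : ℕ → ℝ} {C : ℝ} (ha : ∀ n, |a n| ≤ C) :
    Tendsto (fun x : ℝ => ∑' n, a n * x ^ n) (𝓝 0) (𝓝 (a 0)) := by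
  have hcont : ContinuousOn (fun x : ℝ => ∑' n, a n * x ^ n) (Icc (-(1 / 2)) (1 / 2)) := by
    refine continuousOn_tsum (fun n => by fun_prop) (summable_geometric_two.mul_left C)
      fun n x hx => ?_
    rw [norm_mul, norm_pow, Real.norm_eq_abs, Real.norm_eq_abs]
    have hx' : |x| ≤ 1 / 2 := abs_le.mpr hx
    exact mul_le_mul (ha n) (pow_le_pow_left₀ (abs_nonneg x) hx' n) (by positivity)
      ((abs_nonneg _).trans (ha n))
  have h0 : ∑' n, a n * (0 : ℝ) ^ n = a 0 := by
    rw [tsum_eq_single 0 fun n hn => by simp [hn]]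
    simp
  have hnhds : Icc (-(1 / 2)) (1 / 2 : ℝ) ∈ 𝓝 0 := Icc_mem_nhds (by norm_num) (by norm_num)
  simpa only [h0] using (hcont.continuousAt hnhds).tendsto

theorem stmt10 :
    (∀ n : ℕ, (0:ℝ) < 2 * ((4*(n:ℝ)^2+20*n+13) / ((2*n+1)*(2*n+3)*(2*n+5)))) ∧
    (∀ r ∈ Ioo (0:ℝ) 1,
      (3*(1 - r^2) - (3 - 4*r^2 - r^4) * (_root_.artanh r / r)) / r^4 =
        2 * ∑' n : ℕ, ((4*(n:ℝ)^2+20*n+13) / ((2*n+1)*(2*n+3)*(2*n+5))) * r^(2*n)) ∧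
    Tendsto (fun r : ℝ => (3*(1 - r^2) - (3 - 4*r^2 - r^4) * (_root_.artanh r / r)) / r^4)
      (𝓝[>] 0) (𝓝 (26/15)) := by
  set f := fun r : ℝ => (3*(1 - r^2) - (3 - 4*r^2 - r^4) * (_root_.artanh r / r)) / r^4
  have hseries : ∀ r ∈ Ioo (0:ℝ) 1, f r = 2 * ∑' n : ℕ, f14Coeff n * r ^ (2 * n) := by
    rintro r ⟨hr₀, hr₁⟩
    rw [(hasSum_f14Coeff_mul_pow hr₀.ne' (abs_lt.mpr ⟨by linarith, hr₁⟩)).tsum_eq]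
    ring
  refine ⟨fun n => mul_pos two_pos (f14Coeff_pos n), hseries, ?_⟩
  have hlim : Tendsto (fun r : ℝ => 2 * ∑' n : ℕ, f14Coeff n * (r ^ 2) ^ n) (𝓝 0)
      (𝓝 (2 * f14Coeff 0)) := by
    have hsq : Tendsto (fun r : ℝ => r ^ 2) (𝓝 0) (𝓝 0) := by
      simpa using (continuous_pow 2).tendsto (0 : ℝ)
    have habs : ∀ n, |f14Coeff n| ≤ 1 := fun n =>
      (abs_of_pos (f14Coeff_pos n)).le.trans (f14Coeff_le_one n)
    exact ((tendsto_tsum_mul_pow_zero habs).comp hsq).const_mul 2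
  refine (hlim.mono_left nhdsWithin_le_nhds).congr' ?_ |>.trans (by norm_num [f14Coeff])
  filter_upwards [Ioo_mem_nhdsGT (zero_lt_one' ℝ)] with r hr
  simp_rw [hseries r hr, ← pow_mul]
end

section
/- The function f₂₃(r) = 2·(1-r²)·(artanh(r)/r)·K(r) + [(r - (1-r²)·artanh(r))/r³]·E(r) is strictly decreasing on (0,1), with limits 4π/3 as r→0⁺ and 1 as r→1⁻. -/
/-!
Writing `K` and `E` as integrals, `f₂₃(r) = ∫₀^{π/2} (a(r)/Δ + b(r) Δ) dt` with
`Δ = √(1 - r² sin² t)`, `a(r) = 2(1 - r²) artanh r / r` and `b(r) = (r - (1 - r²) artanh r)/r³`.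
For fixed `t` the integrand is strictly decreasing in `r`: its `r`-derivative is `N(r, Δ²)/(r⁴Δ³)`,
where `N(r, ·)` is a convex quadratic whose values at the ends `1 - r²` and `1` of the range of
`Δ²` are negative by the polynomial bounds `(3 - 5r²) artanh r < 3r - 4r³` and
`(3 - 3r² - 2r⁴) artanh r < 3r - 2r³`. These, like all bounds on `artanh` used here, follow by
differentiating and comparing at `0`.

As `r → 0⁺`, `a → 2`, `b → 2/3` and `Δ → 1`, so the integrand tends to `8/3`; being decreasing in
`r`, it is bounded by `8/3`, which gives dominated convergence for both limits. As `r → 1⁻`,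
`(1 - r²) artanh r → 0`, so `a → 0`, `b → 1` and the integrand tends to `cos t` for `t < π/2`,
whose integral is `1`.
-/

open Real Set Filter Topology

open MeasureTheory
open scoped Interval

lemma pos_of_hasDerivAt_pos {F F' : ℝ → ℝ} {a b : ℝ} (ha : F a = 0)
    (hF : ∀ x ∈ Ico a b, HasDerivAt F (F' x) x) (hF' : ∀ x ∈ Ioo a b, 0 < F' x) :
    ∀ x ∈ Ioo a b, 0 < F x := by
  have hmono : StrictMonoOn F (Ico a b) := by
    refine strictMonoOn_of_hasDerivWithinAt_pos (f' := F') (convex_Ico a b)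
      (fun x hx ↦ (hF x hx).continuousAt.continuousWithinAt) (fun x hx ↦ ?_) ?_
    · rw [interior_Ico] at hx ⊢
      exact (hF x (Ioo_subset_Ico_self hx)).hasDerivWithinAt
    · simpa only [interior_Ico] using hF'
  intro x hx
  simpa [ha] using hmono (left_mem_Ico.2 (hx.1.trans hx.2)) (Ioo_subset_Ico_self hx) hx.1

lemma hasDerivAt_artanh_s15 {x : ℝ} (hx : x ∈ Ioo (-1) 1) :
    HasDerivAt _root_.artanh (1 - x^2)⁻¹ x := by
  obtain ⟨h₁, h₂⟩ := hx
  have hnum : (1 : ℝ) + x ≠ 0 := by linarith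
  have hden : (1 : ℝ) - x ≠ 0 := by linarith
  have hq := ((hasDerivAt_id x).const_add 1).div ((hasDerivAt_id x).const_sub 1) hden
  refine ((hq.log (div_ne_zero hnum hden)).const_mul (1/2 : ℝ)).congr_deriv ?_
  have : (1 : ℝ) - x^2 ≠ 0 := by nlinarith
  simp only [id, Pi.div_apply]
  field_simp
  ring

lemma add_mul_artanh_pos {p q p' q' : ℝ → ℝ} (hp : ∀ x, HasDerivAt p (p' x) x)
    (hq : ∀ x, HasDerivAt q (q' x) x) (hp₀ : p 0 = 0)
    -- `(1 - x²)` times the derivative of `p + q * artanh`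
    (hderiv : ∀ x ∈ Ioo (0 : ℝ) 1, 0 < (p' x + q' x * _root_.artanh x) * (1 - x^2) + q x) :
    ∀ x ∈ Ioo (0 : ℝ) 1, 0 < p x + q x * _root_.artanh x := by
  refine pos_of_hasDerivAt_pos (F' := fun x ↦ p' x + (q' x * _root_.artanh x + q x * (1 - x^2)⁻¹))
    (by simp [hp₀, _root_.artanh]) (fun x hx ↦ ?_) (fun x hx ↦ ?_)
  · exact ((hp x).add ((hq x).mul (hasDerivAt_artanh_s15 ⟨by linarith [hx.1], hx.2⟩))).congr_deriv rfl
  · have h : 0 < 1 - x^2 := by nlinarith [hx.1, hx.2]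
    have : p' x + (q' x * _root_.artanh x + q x * (1 - x^2)⁻¹)
        = ((p' x + q' x * _root_.artanh x) * (1 - x^2) + q x) / (1 - x^2) := by
      field_simp
      ring
    rw [this]
    exact div_pos (hderiv x hx) h

section
variable {x : ℝ} (hx : x ∈ Ioo (0 : ℝ) 1)
include hx

lemma lt_artanh : x < _root_.artanh x := by
  have := add_mul_artanh_pos (p := fun x ↦ -x) (q := fun _ ↦ 1) (p' := fun _ ↦ -1) (q' := fun _ ↦ 0)
    (fun x ↦ (hasDerivAt_id x).neg) (fun x ↦ hasDerivAt_const x 1) neg_zero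
    (fun x hx ↦ by nlinarith [hx.1]) x hx
  linarith

lemma one_sub_sq_mul_artanh_lt : (1 - x^2) * _root_.artanh x < x := by
  have := add_mul_artanh_pos (p := fun x ↦ x) (q := fun x ↦ x^2 - 1) (p' := fun _ ↦ 1)
    (q' := fun x ↦ 2 * x) hasDerivAt_id
    (fun x ↦ ((hasDerivAt_pow 2 x).sub_const 1).congr_deriv (by ring)) rfl
    (fun x ⟨h₀, h₁⟩ ↦ by
      have := lt_artanh ⟨h₀, h₁⟩
      have : 0 < 1 - x^2 := by nlinarith
      nlinarith [mul_pos (mul_pos h₀ h₀) this]) x hx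
  linarith

lemma three_sub_five_sq_mul_artanh_lt : (3 - 5 * x^2) * _root_.artanh x < 3 * x - 4 * x^3 := by
  have := add_mul_artanh_pos (p := fun x ↦ 3 * x - 4 * x^3) (q := fun x ↦ 5 * x^2 - 3)
    (p' := fun x ↦ 3 - 12 * x^2) (q' := fun x ↦ 10 * x)
    (fun x ↦ (((hasDerivAt_id x).const_mul 3).sub ((hasDerivAt_pow 3 x).const_mul 4)).congr_deriv
      (by ring))
    (fun x ↦ (((hasDerivAt_pow 2 x).const_mul 5).sub_const 3).congr_deriv (by ring))
    (by ring)
    (fun x ⟨h₀, h₁⟩ ↦ by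
      have := lt_artanh ⟨h₀, h₁⟩
      have : 0 < 1 - x^2 := by nlinarith
      nlinarith [mul_pos h₀ this, pow_pos h₀ 4]) x hx
  linarith

lemma three_sub_three_sq_sub_two_pow_four_mul_artanh_lt :
    (3 - 3 * x^2 - 2 * x^4) * _root_.artanh x < 3 * x - 2 * x^3 := by
  have := add_mul_artanh_pos (p := fun x ↦ 3 * x - 2 * x^3) (q := fun x ↦ 3 * x^2 + 2 * x^4 - 3)
    (p' := fun x ↦ 3 - 6 * x^2) (q' := fun x ↦ 6 * x + 8 * x^3)
    (fun x ↦ (((hasDerivAt_id x).const_mul 3).sub ((hasDerivAt_pow 3 x).const_mul 2)).congr_deriv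
      (by ring))
    (fun x ↦ ((((hasDerivAt_pow 2 x).const_mul 3).add ((hasDerivAt_pow 4 x).const_mul 2)).sub_const
      3).congr_deriv (by ring))
    (by ring)
    (fun x ⟨h₀, h₁⟩ ↦ by
      have := lt_artanh ⟨h₀, h₁⟩
      have : 0 < 1 - x^2 := by nlinarith
      nlinarith [mul_pos (mul_pos h₀ this) (by positivity : 0 < 6 + 8 * x^2), pow_pos h₀ 4]) x hx
  linarith

end

noncomputable def coeffK (r : ℝ) : ℝ := 2 * (1 - r^2) * (_root_.artanh r / r)

noncomputable def coeffE (r : ℝ) : ℝ := (r - (1 - r^2) * _root_.artanh r) / r^3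

section
variable {r : ℝ} (hr : r ∈ Ioo (0 : ℝ) 1)
include hr

lemma two_mul_one_sub_sq_lt_coeffK : 2 * (1 - r^2) < coeffK r := by
  have h : 0 < 1 - r^2 := by nlinarith [hr.1, hr.2]
  have : 1 < _root_.artanh r / r := by rw [one_lt_div hr.1]; exact lt_artanh hr
  unfold coeffK
  nlinarith

lemma coeffK_lt_two : coeffK r < 2 := by
  have : (1 - r^2) * _root_.artanh r / r < 1 := (div_lt_one hr.1).2 (one_sub_sq_mul_artanh_lt hr)
  calc coeffK r = 2 * ((1 - r^2) * _root_.artanh r / r) := by unfold coeffK; ring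
    _ < 2 := by linarith

lemma two_thirds_lt_coeffE : 2 / 3 < coeffE r := by
  have := add_mul_artanh_pos (p := fun x ↦ x - 2 / 3 * x^3) (q := fun x ↦ x^2 - 1)
    (p' := fun x ↦ 1 - 2 * x^2) (q' := fun x ↦ 2 * x)
    (fun x ↦ ((hasDerivAt_id x).sub ((hasDerivAt_pow 3 x).const_mul (2 / 3))).congr_deriv
      (by ring))
    (fun x ↦ ((hasDerivAt_pow 2 x).sub_const 1).congr_deriv (by ring)) (by ring)
    (fun x ⟨h₀, h₁⟩ ↦ by
      have := lt_artanh ⟨h₀, h₁⟩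
      have : 0 < 1 - x^2 := by nlinarith
      nlinarith [mul_pos (mul_pos h₀ this) h₀]) r hr
  unfold coeffE
  rw [lt_div_iff₀ (pow_pos hr.1 3)]
  linarith

lemma coeffE_lt : coeffE r < 2 / 3 / (1 - r^2) := by
  have := add_mul_artanh_pos (p := fun x ↦ 5 / 3 * x^3 - x) (q := fun x ↦ (1 - x^2)^2)
    (p' := fun x ↦ 5 * x^2 - 1) (q' := fun x ↦ -4 * x * (1 - x^2))
    (fun x ↦ (((hasDerivAt_pow 3 x).const_mul (5 / 3)).sub (hasDerivAt_id x)).congr_deriv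
      (by ring))
    (fun x ↦ (((hasDerivAt_pow 2 x).const_sub 1).pow 2).congr_deriv (by ring)) (by ring)
    (fun x hx ↦ by
      have h := one_sub_sq_mul_artanh_lt hx
      have : 0 < 1 - x^2 := by nlinarith [hx.1, hx.2]
      nlinarith [mul_pos (mul_pos this hx.1) (sub_pos.2 h)]) r hr
  have h : 0 < 1 - r^2 := by nlinarith [hr.1, hr.2]
  unfold coeffE
  rw [div_lt_div_iff₀ (pow_pos hr.1 3) h]
  nlinarith

end

lemma tendsto_coeffK_nhdsGT_zero : Tendsto coeffK (𝓝[>] 0) (𝓝 2) := by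
  have hlow : Tendsto (fun r : ℝ ↦ 2 * (1 - r^2)) (𝓝[>] 0) (𝓝 2) :=
    ((by fun_prop : Continuous fun r : ℝ ↦ 2 * (1 - r^2)).tendsto' 0 2 (by norm_num)).mono_left
      nhdsWithin_le_nhds
  refine tendsto_of_tendsto_of_tendsto_of_le_of_le' hlow tendsto_const_nhds ?_ ?_ <;>
    filter_upwards [Ioo_mem_nhdsGT one_pos] with r hr
  exacts [(two_mul_one_sub_sq_lt_coeffK hr).le, (coeffK_lt_two hr).le]

lemma tendsto_coeffE_nhdsGT_zero : Tendsto coeffE (𝓝[>] 0) (𝓝 (2 / 3)) := by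
  have hup : Tendsto (fun r : ℝ ↦ 2 / 3 / (1 - r^2)) (𝓝[>] 0) (𝓝 (2 / 3)) := by
    have := tendsto_const_nhds (x := (2 / 3 : ℝ)).div
      ((by fun_prop : Continuous fun r : ℝ ↦ 1 - r^2).tendsto 0) (by norm_num)
    rw [show (2 : ℝ) / 3 / (1 - 0^2) = 2 / 3 by norm_num] at this
    exact this.mono_left nhdsWithin_le_nhds
  refine tendsto_of_tendsto_of_tendsto_of_le_of_le' tendsto_const_nhds hup ?_ ?_ <;>
    filter_upwards [Ioo_mem_nhdsGT one_pos] with r hr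
  exacts [(two_thirds_lt_coeffE hr).le, (coeffE_lt hr).le]

lemma tendsto_one_sub_sq_mul_artanh_nhdsLT_one :
    Tendsto (fun r ↦ (1 - r^2) * _root_.artanh r) (𝓝[<] 1) (𝓝 0) := by
  have hcont : ContinuousAt
      (fun r ↦ (1 + r) * ((1 - r) * log (1 + r) + negMulLog (1 - r)) / 2) 1 := by
    fun_prop (disch := norm_num)
  have h := hcont.tendsto
  simp only [sub_self, zero_mul, negMulLog_zero, add_zero, mul_zero, zero_div] at h
  refine (h.mono_left nhdsWithin_le_nhds).congr' ?_
  filter_upwards [Ioo_mem_nhdsLT (show (-1 : ℝ) < 1 by norm_num)] with r ⟨h₁, h₂⟩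
  rw [_root_.artanh, log_div (by linarith) (by linarith), negMulLog]
  ring

lemma tendsto_coeffK_nhdsLT_one : Tendsto coeffK (𝓝[<] 1) (𝓝 0) := by
  have hid : Tendsto (fun r : ℝ ↦ r) (𝓝[<] 1) (𝓝 1) := tendsto_nhdsWithin_of_tendsto_nhds tendsto_id
  have : coeffK = fun r ↦ 2 * ((1 - r^2) * _root_.artanh r) / r := by
    funext r; unfold coeffK; ring
  rw [this]
  simpa [Pi.div_def] using
    (tendsto_one_sub_sq_mul_artanh_nhdsLT_one.const_mul 2).div hid one_ne_zero

lemma tendsto_coeffE_nhdsLT_one : Tendsto coeffE (𝓝[<] 1) (𝓝 1) := by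
  have hid : Tendsto (fun r : ℝ ↦ r) (𝓝[<] 1) (𝓝 1) := tendsto_nhdsWithin_of_tendsto_nhds tendsto_id
  have := (hid.sub tendsto_one_sub_sq_mul_artanh_nhdsLT_one).div (hid.pow 3) (by norm_num)
  rwa [sub_zero, one_pow, div_one] at this

lemma hasDerivAt_coeffK {r : ℝ} (hr : r ∈ Ioo (0 : ℝ) 1) :
    HasDerivAt coeffK (2 * (r - (1 + r^2) * _root_.artanh r) / r^2) r := by
  have hu := hasDerivAt_artanh_s15 ⟨by linarith [hr.1], hr.2⟩
  refine ((((hasDerivAt_pow 2 r).const_sub 1).const_mul 2).mul (hu.div (hasDerivAt_id r)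
    hr.1.ne')).congr_deriv ?_
  have : 1 - r^2 ≠ 0 := by nlinarith [hr.1, hr.2]
  have := hr.1.ne'
  simp only [id, Pi.div_apply]
  field_simp
  ring

lemma hasDerivAt_coeffE {r : ℝ} (hr : r ∈ Ioo (0 : ℝ) 1) :
    HasDerivAt coeffE (((3 - r^2) * _root_.artanh r - 3 * r) / r^4) r := by
  have hu := hasDerivAt_artanh_s15 ⟨by linarith [hr.1], hr.2⟩
  refine (((hasDerivAt_id r).sub (((hasDerivAt_pow 2 r).const_sub 1).mul hu)).div
    (hasDerivAt_pow 3 r) (pow_ne_zero 3 hr.1.ne')).congr_deriv ?_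
  have : 1 - r^2 ≠ 0 := by nlinarith [hr.1, hr.2]
  have := hr.1.ne'
  simp only [id, Pi.sub_apply, Pi.mul_apply]
  field_simp
  ring

noncomputable def ellipticDelta (r t : ℝ) : ℝ := √(1 - r^2 * sin t ^ 2)

lemma one_sub_sq_le_one_sub_sq_mul_sin_sq (r t : ℝ) : 1 - r^2 ≤ 1 - r^2 * sin t ^ 2 := by
  nlinarith [sin_sq_le_one t, sq_nonneg r]

lemma one_sub_sq_mul_sin_sq_le_one (r t : ℝ) : 1 - r^2 * sin t ^ 2 ≤ 1 := by
  nlinarith [sq_nonneg r, sq_nonneg (sin t)]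

lemma one_sub_sq_mul_sin_sq_pos {r : ℝ} (hr : r^2 < 1) (t : ℝ) : 0 < 1 - r^2 * sin t ^ 2 := by
  linarith [one_sub_sq_le_one_sub_sq_mul_sin_sq r t]

lemma ellipticDelta_pos {r : ℝ} (hr : r^2 < 1) (t : ℝ) : 0 < ellipticDelta r t :=
  sqrt_pos.2 (one_sub_sq_mul_sin_sq_pos hr t)

lemma continuous_ellipticDelta (r : ℝ) : Continuous (ellipticDelta r) := by
  unfold ellipticDelta; fun_prop

lemma hasDerivAt_ellipticDelta {r : ℝ} (hr : r^2 < 1) (t : ℝ) :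
    HasDerivAt (fun ρ ↦ ellipticDelta ρ t) (-(r * sin t ^ 2) / ellipticDelta r t) r := by
  refine (((hasDerivAt_pow 2 r).mul_const (sin t ^ 2)).const_sub 1).sqrt
    (one_sub_sq_mul_sin_sq_pos hr t).ne' |>.congr_deriv ?_
  unfold ellipticDelta
  field_simp
  ring

noncomputable def f23Integrand (r t : ℝ) : ℝ :=
  coeffK r / ellipticDelta r t + coeffE r * ellipticDelta r t

noncomputable def integrandDerivNumerator (r s : ℝ) : ℝ :=
  2 * (_root_.artanh r - r) * s^2 + ((1 - 5 * r^2) * _root_.artanh r + 2 * r^3 - r) * s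
    + 2 * r^2 * (1 - r^2) * _root_.artanh r

lemma hasDerivAt_f23Integrand {r : ℝ} (hr : r ∈ Ioo (0 : ℝ) 1) (t : ℝ) :
    HasDerivAt (fun ρ ↦ f23Integrand ρ t)
      (integrandDerivNumerator r (ellipticDelta r t ^ 2) / (r^4 * ellipticDelta r t ^ 3)) r := by
  have hr2 : r^2 < 1 := pow_lt_one₀ hr.1.le hr.2 two_ne_zero
  have hw := (ellipticDelta_pos hr2 t).ne'
  -- with `sin t ^ 2` expressed through `Δ²`, the derivative is a rational function of `r`, `Δ`
  -- and `artanh r` only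
  have hsin : sin t ^ 2 = (1 - ellipticDelta r t ^ 2) / r^2 := by
    rw [ellipticDelta, sq_sqrt (one_sub_sq_mul_sin_sq_pos hr2 t).le,
      eq_div_iff (pow_ne_zero 2 hr.1.ne')]
    ring
  refine (((hasDerivAt_coeffK hr).div (hasDerivAt_ellipticDelta hr2 t) hw).add
    ((hasDerivAt_coeffE hr).mul (hasDerivAt_ellipticDelta hr2 t))).congr_deriv ?_
  rw [hsin, integrandDerivNumerator, coeffK, coeffE]
  have := hr.1.ne'
  field_simp
  ring

lemma quadratic_neg_of_neg_of_neg {a b c α β s : ℝ} (ha : 0 ≤ a)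
    (hα : a * α^2 + b * α + c < 0) (hβ : a * β^2 + b * β + c < 0) (hs : s ∈ Icc α β) :
    a * s^2 + b * s + c < 0 := by
  obtain ⟨hαs, hsβ⟩ := hs
  rcases hαs.eq_or_lt with rfl | hαs
  · exact hα
  have key : (β - α) * (a * s^2 + b * s + c) = (β - s) * (a * α^2 + b * α + c)
      + (s - α) * (a * β^2 + b * β + c) - a * (s - α) * (β - s) * (β - α) := by ring
  have h₁ : (β - s) * (a * α^2 + b * α + c) ≤ 0 := mul_nonpos_of_nonneg_of_nonpos (by linarith) hα.le
  have h₂ : (s - α) * (a * β^2 + b * β + c) < 0 := mul_neg_of_pos_of_neg (by linarith) hβ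
  have h₃ : 0 ≤ a * (s - α) * (β - s) * (β - α) := by
    exact mul_nonneg (mul_nonneg (mul_nonneg ha (by linarith)) (by linarith)) (by linarith)
  nlinarith

lemma integrandDerivNumerator_neg {r s : ℝ} (hr : r ∈ Ioo (0 : ℝ) 1) (hs : s ∈ Icc (1 - r^2) 1) :
    integrandDerivNumerator r s < 0 := by
  have h : 0 < 1 - r^2 := by nlinarith [hr.1, hr.2]
  have h₁ := lt_artanh hr
  have h₂ := three_sub_five_sq_mul_artanh_lt hr
  have h₃ := three_sub_three_sq_sub_two_pow_four_mul_artanh_lt hr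
  refine quadratic_neg_of_neg_of_neg (by linarith) ?_ ?_ hs
  · nlinarith [mul_pos h (sub_pos.2 h₂)]
  · nlinarith

lemma f23Integrand_strictAntiOn (t : ℝ) : StrictAntiOn (fun r ↦ f23Integrand r t) (Ioo 0 1) := by
  refine strictAntiOn_of_hasDerivWithinAt_neg (convex_Ioo 0 1) (f' := fun r ↦
      integrandDerivNumerator r (ellipticDelta r t ^ 2) / (r^4 * ellipticDelta r t ^ 3))
    (fun r hr ↦ (hasDerivAt_f23Integrand hr t).continuousAt.continuousWithinAt) (fun r hr ↦ ?_)
    (fun r hr ↦ ?_)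
  · rw [interior_Ioo] at hr ⊢
    exact (hasDerivAt_f23Integrand hr t).hasDerivWithinAt
  · rw [interior_Ioo] at hr
    have hr2 : r^2 < 1 := pow_lt_one₀ hr.1.le hr.2 two_ne_zero
    have hw := ellipticDelta_pos hr2 t
    have hs : ellipticDelta r t ^ 2 ∈ Icc (1 - r^2) 1 := by
      rw [ellipticDelta, sq_sqrt (one_sub_sq_mul_sin_sq_pos hr2 t).le]
      exact ⟨one_sub_sq_le_one_sub_sq_mul_sin_sq r t, one_sub_sq_mul_sin_sq_le_one r t⟩
    exact div_neg_of_neg_of_pos (integrandDerivNumerator_neg hr hs) (by have := hr.1; positivity)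

lemma f23Integrand_pos {r : ℝ} (hr : r ∈ Ioo (0 : ℝ) 1) (t : ℝ) : 0 < f23Integrand r t := by
  have := ellipticDelta_pos (pow_lt_one₀ hr.1.le hr.2 two_ne_zero) t
  have := two_mul_one_sub_sq_lt_coeffK hr
  have := two_thirds_lt_coeffE hr
  have : 0 < coeffK r := by nlinarith [hr.1, hr.2]
  have : 0 < coeffE r := by linarith
  unfold f23Integrand
  positivity

lemma continuous_f23Integrand {r : ℝ} (hr : r^2 < 1) : Continuous (f23Integrand r) :=
  (continuous_const.div (continuous_ellipticDelta r) fun t ↦ (ellipticDelta_pos hr t).ne').add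
    (continuous_const.mul (continuous_ellipticDelta r))

lemma tendsto_f23Integrand_nhdsGT_zero (t : ℝ) :
    Tendsto (fun r ↦ f23Integrand r t) (𝓝[>] 0) (𝓝 (8 / 3)) := by
  have hΔ : Tendsto (fun r ↦ ellipticDelta r t) (𝓝[>] 0) (𝓝 1) :=
    ((by unfold ellipticDelta; fun_prop : Continuous fun r ↦ ellipticDelta r t).tendsto' 0 1
      (by simp [ellipticDelta])).mono_left nhdsWithin_le_nhds
  have := (tendsto_coeffK_nhdsGT_zero.div hΔ one_ne_zero).add (tendsto_coeffE_nhdsGT_zero.mul hΔ)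
  rwa [show (2 : ℝ) / 1 + 2 / 3 * 1 = 8 / 3 by norm_num] at this

lemma f23Integrand_le {r : ℝ} (hr : r ∈ Ioo (0 : ℝ) 1) (t : ℝ) : f23Integrand r t ≤ 8 / 3 := by
  refine ge_of_tendsto (tendsto_f23Integrand_nhdsGT_zero t) ?_
  filter_upwards [Ioo_mem_nhdsGT hr.1] with ρ hρ
  exact (f23Integrand_strictAntiOn t ⟨hρ.1, hρ.2.trans hr.2⟩ hr hρ.2).le

lemma tendsto_f23Integrand_nhdsLT_one {t : ℝ} (ht : 0 < cos t) :
    Tendsto (fun r ↦ f23Integrand r t) (𝓝[<] 1) (𝓝 (cos t)) := by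
  have hΔ : Tendsto (fun r ↦ ellipticDelta r t) (𝓝[<] 1) (𝓝 (cos t)) :=
    ((by unfold ellipticDelta; fun_prop : Continuous fun r ↦ ellipticDelta r t).tendsto' 1 (cos t)
      (by rw [ellipticDelta, one_pow, one_mul, ← cos_sq', sqrt_sq ht.le])).mono_left
      nhdsWithin_le_nhds
  have := (tendsto_coeffK_nhdsLT_one.div hΔ ht.ne').add (tendsto_coeffE_nhdsLT_one.mul hΔ)
  rwa [zero_div, zero_add, one_mul] at this

noncomputable def f23 (r : ℝ) : ℝ := coeffK r * ellipticK r + coeffE r * ellipticE r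

lemma f23_eq_integral {r : ℝ} (hr : r^2 < 1) : f23 r = ∫ t in (0 : ℝ)..(π / 2), f23Integrand r t := by
  have hK : ellipticK r = ∫ t in (0 : ℝ)..(π / 2), (ellipticDelta r t)⁻¹ := by
    refine intervalIntegral.integral_congr fun t _ ↦ ?_
    rw [ellipticDelta, sqrt_eq_rpow, ← rpow_neg (one_sub_sq_mul_sin_sq_pos hr t).le]
  have hE : ellipticE r = ∫ t in (0 : ℝ)..(π / 2), ellipticDelta r t := by
    simp only [ellipticE, ellipticDelta, sqrt_eq_rpow]
  have hΔ := continuous_ellipticDelta r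
  have hΔinv : Continuous fun t ↦ (ellipticDelta r t)⁻¹ :=
    hΔ.inv₀ fun t ↦ (ellipticDelta_pos hr t).ne'
  simp only [f23Integrand, div_eq_mul_inv (coeffK r)]
  rw [intervalIntegral.integral_add ((hΔinv.intervalIntegrable _ _).const_mul _)
    ((hΔ.intervalIntegrable _ _).const_mul _), intervalIntegral.integral_const_mul,
    intervalIntegral.integral_const_mul, f23, hK, hE]

lemma strictAntiOn_f23 : StrictAntiOn f23 (Ioo 0 1) := by
  intro a ha b hb hab
  have hsq : ∀ r ∈ Ioo (0 : ℝ) 1, r^2 < 1 := fun r hr ↦ pow_lt_one₀ hr.1.le hr.2 two_ne_zero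
  rw [f23_eq_integral (hsq a ha), f23_eq_integral (hsq b hb)]
  exact intervalIntegral.integral_lt_integral_of_continuousOn_of_le_of_exists_lt (by positivity)
    (continuous_f23Integrand (hsq b hb)).continuousOn
    (continuous_f23Integrand (hsq a ha)).continuousOn
    (fun t _ ↦ (f23Integrand_strictAntiOn t ha hb hab).le)
    ⟨0, left_mem_Icc.2 (by positivity), f23Integrand_strictAntiOn 0 ha hb hab⟩

lemma tendsto_f23_of_tendsto_f23Integrand {l : Filter ℝ} [l.IsCountablyGenerated]
    (hl : ∀ᶠ r in l, r ∈ Ioo 0 1) {g : ℝ → ℝ}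
    (hg : ∀ᵐ t, t ∈ Ι 0 (π / 2) → Tendsto (fun r ↦ f23Integrand r t) l (𝓝 (g t))) :
    Tendsto f23 l (𝓝 (∫ t in (0 : ℝ)..(π / 2), g t)) := by
  have hsq : ∀ r ∈ Ioo (0 : ℝ) 1, r^2 < 1 := fun r hr ↦ pow_lt_one₀ hr.1.le hr.2 two_ne_zero
  refine (intervalIntegral.tendsto_integral_filter_of_dominated_convergence (fun _ ↦ 8 / 3)
    (hl.mono fun r hr ↦ (continuous_f23Integrand (hsq r hr)).aestronglyMeasurable)
    (hl.mono fun r hr ↦ ae_of_all _ fun t _ ↦ ?_) intervalIntegrable_const hg).congr'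
    (hl.mono fun r hr ↦ (f23_eq_integral (hsq r hr)).symm)
  rw [norm_of_nonneg (f23Integrand_pos hr t).le]
  exact f23Integrand_le hr t

lemma tendsto_f23_nhdsGT_zero : Tendsto f23 (𝓝[>] 0) (𝓝 (4 * π / 3)) := by
  have := tendsto_f23_of_tendsto_f23Integrand (Ioo_mem_nhdsGT one_pos)
    (ae_of_all _ fun t _ ↦ tendsto_f23Integrand_nhdsGT_zero t)
  rwa [intervalIntegral.integral_const, smul_eq_mul, show (π / 2 - 0) * (8 / 3) = 4 * π / 3 by ring]
    at this

lemma tendsto_f23_nhdsLT_one : Tendsto f23 (𝓝[<] 1) (𝓝 1) := by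
  have := tendsto_f23_of_tendsto_f23Integrand (g := cos) (Ioo_mem_nhdsLT one_pos) ?_
  · rwa [integral_cos, sin_pi_div_two, sin_zero, sub_zero] at this
  filter_upwards [Measure.ae_ne volume (π / 2)] with t hne ht
  rw [uIoc_of_le (by positivity)] at ht
  exact tendsto_f23Integrand_nhdsLT_one
    (cos_pos_of_mem_Ioo ⟨by linarith [ht.1, pi_pos], lt_of_le_of_ne ht.2 hne⟩)

theorem stmt15 :
    StrictAntiOn (fun r : ℝ =>
      2 * (1 - r^2) * (_root_.artanh r / r) * ellipticK r +
        ((r - (1 - r^2) * _root_.artanh r) / r^3) * ellipticE r) (Ioo 0 1) ∧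
    Tendsto (fun r : ℝ =>
      2 * (1 - r^2) * (_root_.artanh r / r) * ellipticK r +
        ((r - (1 - r^2) * _root_.artanh r) / r^3) * ellipticE r) (𝓝[>] 0) (𝓝 (4*π/3)) ∧
    Tendsto (fun r : ℝ =>
      2 * (1 - r^2) * (_root_.artanh r / r) * ellipticK r +
        ((r - (1 - r^2) * _root_.artanh r) / r^3) * ellipticE r) (𝓝[<] 1) (𝓝 1) :=
  ⟨strictAntiOn_f23, tendsto_f23_nhdsGT_zero, tendsto_f23_nhdsLT_one⟩
end
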